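/- arXiv:math/0011254 — 4 statements merged into one kernel-verified Lean document; each statement's English description precedes it below -/
import Mathlib

section
/- For every real x ≥ 1, one has log x = ∫_1^x M(t) · ⌊x/t⌋ · t^{-1} dt. -/
/-!
Writing `⌊x/t⌋` as the number of `m ≤ x` with `t ≤ x/m` turns the integral into
`∑_{m ≤ x} ∫_1^{x/m} M(t) dt/t`, and writing `M(t) = ∑_{k ≤ t} μ(k)` gives
`∫_1^y M(t) dt/t = ∑_{k ≤ y} μ(k) log(y/k)`. The integral is therefore
`∑_{mk ≤ x} μ(k) log(x/(mk)) = ∑_{n ≤ x} log(x/n) ∑_{k ∣ n} μ(k) = log x`.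
-/

open MeasureTheory Real Filter Set

/-- The Mertens function extended to real arguments: `M x = ∑_{1 ≤ k ≤ x} μ(k)`. -/
noncomputable def mertens (x : ℝ) : ℝ :=
  ∑ k ∈ Finset.Icc 1 ⌊x⌋₊, (ArithmeticFunction.moebius k : ℝ)

theorem IntervalIntegrable.indicator {E : Type*} [NormedAddCommGroup E] {f : ℝ → E}
    {μ : Measure ℝ} {a b : ℝ} {s : Set ℝ} (hf : IntervalIntegrable f μ a b)
    (hs : MeasurableSet s) : IntervalIntegrable (s.indicator f) μ a b := by
  rw [intervalIntegrable_iff] at hf ⊢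
  exact hf.indicator hs

theorem intervalIntegral.integral_indicator_Ici {E : Type*} [NormedAddCommGroup E]
    [NormedSpace ℝ E] {f : ℝ → E} {μ : Measure ℝ} [NullSingletonClass μ] {a₁ a₂ a₃ : ℝ}
    (h : a₂ ∈ Icc a₁ a₃) :
    ∫ x in a₁..a₃, (Ici a₂).indicator f x ∂μ = ∫ x in a₂..a₃, f x ∂μ := by
  have hae : (Ici a₂).indicator f =ᵐ[μ] (Ioi a₂).indicator f :=
    indicator_ae_eq_of_ae_eq_set Ioi_ae_eq_Ici.symm
  rw [intervalIntegral.integral_congr_ae (hae.mono fun x hx _ => hx),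
    intervalIntegral.integral_of_le (h.1.trans h.2), intervalIntegral.integral_of_le h.2,
    MeasureTheory.integral_indicator measurableSet_Ioi, Measure.restrict_restrict measurableSet_Ioi,
    inter_comm, Ioc_inter_Ioi, sup_eq_right.2 h.1]

theorem intervalIntegrable_indicator_Ici_inv {y : ℝ} (hy : 0 < y) (a : ℝ) :
    IntervalIntegrable ((Ici a).indicator (·⁻¹)) volume 1 y :=
  (intervalIntegrable_inv_iff.2 (Or.inr (notMem_uIcc_of_lt one_pos hy))).indicator
    measurableSet_Ici

open scoped Finset ArithmeticFunction.Moebius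

theorem Finset.filter_Icc_one_natCast_le {K : Type*} [Semiring K] [LinearOrder K]
    [IsStrictOrderedRing K] [FloorSemiring K] {y : K} {N : ℕ} (hy : 0 ≤ y) (hN : ⌊y⌋₊ ≤ N) :
    {k ∈ Finset.Icc 1 N | ((k : ℕ) : K) ≤ y} = Finset.Icc 1 ⌊y⌋₊ := by
  ext k
  simp only [Finset.mem_filter, Finset.mem_Icc, ← Nat.le_floor_iff hy]
  omega

theorem Finset.sum_Icc_sum_Icc_div {M : Type*} [AddCommMonoid M] (N : ℕ) (F : ℕ → ℕ → M) :
    ∑ m ∈ Finset.Icc 1 N, ∑ k ∈ Finset.Icc 1 (N / m), F m k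
      = ∑ n ∈ Finset.Icc 1 N, ∑ p ∈ n.divisorsAntidiagonal, F p.1 p.2 := by
  set S := {p ∈ Finset.Icc 1 N ×ˢ Finset.Icc 1 N | p.1 * p.2 ≤ N}
  have hS : ∀ p : ℕ × ℕ, p ∈ S ↔ p.1 ∈ Finset.Icc 1 N ∧ p.2 ∈ Finset.Icc 1 (N / p.1) := by
    rintro ⟨m, k⟩
    simp only [S, Finset.mem_filter, Finset.mem_product, Finset.mem_Icc]
    constructor
    · rintro ⟨⟨hm, hk, -⟩, hmk⟩
      exact ⟨hm, hk, (Nat.le_div_iff_mul_le hm.1).2 (by rwa [mul_comm])⟩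
    · rintro ⟨hm, hk, hkN⟩
      have hmk := (Nat.le_div_iff_mul_le hm.1).1 hkN
      exact ⟨⟨hm, hk, by nlinarith⟩, by linarith [mul_comm m k]⟩
  have hfiber : ∀ n ∈ Finset.Icc 1 N, {p ∈ S | p.1 * p.2 = n} = n.divisorsAntidiagonal := by
    intro n hn
    rw [Finset.mem_Icc] at hn
    ext ⟨m, k⟩
    simp only [S, Finset.mem_filter, Finset.mem_product, Finset.mem_Icc,
      Nat.mem_divisorsAntidiagonal]
    constructor
    · rintro ⟨-, hmk⟩
      exact ⟨hmk, by omega⟩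
    · rintro ⟨rfl, -⟩
      have hm : 0 < m := Nat.pos_of_ne_zero (by rintro rfl; simp at hn)
      have hk : 0 < k := Nat.pos_of_ne_zero (by rintro rfl; simp at hn)
      exact ⟨⟨⟨⟨hm, by nlinarith⟩, hk, by nlinarith⟩, hn.2⟩, rfl⟩
  calc ∑ m ∈ Finset.Icc 1 N, ∑ k ∈ Finset.Icc 1 (N / m), F m k
      = ∑ p ∈ S, F p.1 p.2 := (Finset.sum_finset_product S _ _ hS (f := fun p => F p.1 p.2)).symm
    _ = ∑ n ∈ Finset.Icc 1 N, ∑ p ∈ S with p.1 * p.2 = n, F p.1 p.2 :=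
      (Finset.sum_fiberwise_of_maps_to (fun p hp => ?_) _).symm
    _ = _ := Finset.sum_congr rfl fun n hn => by rw [hfiber n hn]
  simp only [S, Finset.mem_filter, Finset.mem_product, Finset.mem_Icc] at hp ⊢
  exact ⟨Nat.mul_pos hp.1.1.1 hp.1.2.1, hp.2⟩

theorem sum_divisorsAntidiagonal_moebius_snd {R : Type*} [Ring R] (n : ℕ) :
    ∑ p ∈ n.divisorsAntidiagonal, (μ p.2 : R) = if n = 1 then 1 else 0 := by
  simp_rw [← ArithmeticFunction.intCoe_apply (R := R)]
  rw [Nat.sum_divisorsAntidiagonal' (f := fun _ k => (μ : ArithmeticFunction R) k),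
    ← ArithmeticFunction.coe_zeta_mul_apply, ArithmeticFunction.coe_zeta_mul_coe_moebius,
    ArithmeticFunction.one_apply]

theorem intCast_floor_div_eq_card {K : Type*} [Field K] [LinearOrder K] [IsStrictOrderedRing K]
    [FloorRing K] {x t : K} (hx : 0 ≤ x) (ht : 1 ≤ t) :
    (⌊x / t⌋ : K) = #{m ∈ Finset.Icc 1 ⌊x⌋₊ | t ≤ x / (m : ℕ)} := by
  have hxt : 0 ≤ x / t := div_nonneg hx (zero_le_one.trans ht)
  have hswap : {m ∈ Finset.Icc 1 ⌊x⌋₊ | t ≤ x / (m : ℕ)}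
      = {m ∈ Finset.Icc 1 ⌊x⌋₊ | ((m : ℕ) : K) ≤ x / t} :=
    Finset.filter_congr fun m hm => by
      have hm0 : (0 : K) < m := by exact_mod_cast (Finset.mem_Icc.1 hm).1
      rw [le_div_iff₀ hm0, le_div_iff₀ (zero_lt_one.trans_le ht), mul_comm]
  rw [hswap, Finset.filter_Icc_one_natCast_le hxt (Nat.floor_mono (div_le_self hx ht)),
    Nat.card_Icc, Nat.add_sub_cancel, ← natCast_floor_eq_intCast_floor hxt]

theorem div_natCast_mem_Icc {x : ℝ} (hx : 0 ≤ x) {m : ℕ} (hm : m ∈ Finset.Icc 1 ⌊x⌋₊) :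
    x / m ∈ Icc 1 x := by
  obtain ⟨hm1, hmx⟩ := Finset.mem_Icc.1 hm
  have hm1 : (1 : ℝ) ≤ m := by exact_mod_cast hm1
  have hmx : (m : ℝ) ≤ x := (Nat.le_floor_iff hx).1 hmx
  exact ⟨(one_le_div (by linarith)).2 hmx, div_le_self hx hm1⟩

theorem integral_mul_floor_div {f : ℝ → ℝ} {x : ℝ} (hx : 1 ≤ x)
    (hf : IntervalIntegrable f volume 1 x) :
    ∫ t in 1..x, f t * ⌊x / t⌋ = ∑ m ∈ Finset.Icc 1 ⌊x⌋₊, ∫ t in 1..x / m, f t := by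
  have hsplit : EqOn (fun t => f t * ⌊x / t⌋)
      (fun t => ∑ m ∈ Finset.Icc 1 ⌊x⌋₊, (Iic (x / m)).indicator f t) (uIcc 1 x) := by
    intro t ht
    rw [uIcc_of_le hx] at ht
    simp only [intCast_floor_div_eq_card (by linarith) ht.1, Finset.card_filter, Nat.cast_sum,
      Finset.mul_sum, indicator_apply, mem_Iic]
    push_cast
    simp only [mul_ite, mul_one, mul_zero]
  rw [intervalIntegral.integral_congr hsplit, intervalIntegral.integral_finsetSum
    fun m _ => hf.indicator measurableSet_Iic]
  exact Finset.sum_congr rfl fun m hm =>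
    intervalIntegral.integral_indicator (div_natCast_mem_Icc (by linarith) hm)

theorem mertens_eq_sum_ite {t y : ℝ} (ht : 0 ≤ t) (hty : t ≤ y) :
    mertens t = ∑ k ∈ Finset.Icc 1 ⌊y⌋₊, if (k : ℝ) ≤ t then (μ k : ℝ) else 0 := by
  rw [← Finset.sum_filter, Finset.filter_Icc_one_natCast_le ht (Nat.floor_mono hty), mertens]

theorem mertens_div_eqOn_sum_indicator {y : ℝ} (hy : 1 ≤ y) :
    EqOn (fun t => mertens t / t)
      (fun t => ∑ k ∈ Finset.Icc 1 ⌊y⌋₊, (μ k : ℝ) * (Ici (k : ℝ)).indicator (·⁻¹) t)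
      (uIcc 1 y) := by
  intro t ht
  rw [uIcc_of_le hy] at ht
  simp only [mertens_eq_sum_ite (by linarith [ht.1]) ht.2, div_eq_mul_inv, Finset.sum_mul,
    ite_mul, zero_mul, indicator_apply, mem_Ici, mul_ite, mul_zero]

theorem intervalIntegrable_mertens_div {y : ℝ} (hy : 1 ≤ y) :
    IntervalIntegrable (fun t => mertens t / t) volume 1 y := by
  have hsum := IntervalIntegrable.sum (Finset.Icc 1 ⌊y⌋₊) fun k _ =>
    (intervalIntegrable_indicator_Ici_inv (by linarith) (k : ℝ)).const_mul (μ k : ℝ)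
  rw [Finset.sum_fn] at hsum
  exact hsum.congr ((mertens_div_eqOn_sum_indicator hy).symm.mono uIoc_subset_uIcc)

theorem integral_mertens_div {y : ℝ} (hy : 1 ≤ y) :
    ∫ t in 1..y, mertens t / t = ∑ k ∈ Finset.Icc 1 ⌊y⌋₊, (μ k : ℝ) * log (y / k) := by
  rw [intervalIntegral.integral_congr (mertens_div_eqOn_sum_indicator hy),
    intervalIntegral.integral_finsetSum fun k _ =>
      (intervalIntegrable_indicator_Ici_inv (by linarith) _).const_mul _]
  refine Finset.sum_congr rfl fun k hk => ?_
  obtain ⟨hk1, hky⟩ := Finset.mem_Icc.1 hk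
  have hk1 : (1 : ℝ) ≤ k := by exact_mod_cast hk1
  have hky : (k : ℝ) ≤ y := (Nat.le_floor_iff (by linarith)).1 hky
  rw [intervalIntegral.integral_const_mul, intervalIntegral.integral_indicator_Ici ⟨hk1, hky⟩,
    integral_inv_of_pos (by linarith) (by linarith)]

theorem sum_sum_moebius_mul_log_div_div {x : ℝ} (hx : 1 ≤ x) :
    ∑ m ∈ Finset.Icc 1 ⌊x⌋₊, ∑ k ∈ Finset.Icc 1 ⌊x / m⌋₊, (μ k : ℝ) * log (x / m / k)
      = log x := by
  have hfiber : ∀ n : ℕ, ∑ p ∈ n.divisorsAntidiagonal, (μ p.2 : ℝ) * log (x / p.1 / p.2)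
      = if n = 1 then log x else 0 := by
    intro n
    rw [Finset.sum_congr rfl fun p hp => by
        rw [div_div, ← Nat.cast_mul, (Nat.mem_divisorsAntidiagonal.1 hp).1],
      ← Finset.sum_mul, sum_divisorsAntidiagonal_moebius_snd]
    split_ifs with h <;> simp [h]
  simp_rw [Nat.floor_div_natCast]
  rw [Finset.sum_Icc_sum_Icc_div, Finset.sum_congr rfl fun n _ => hfiber n, Finset.sum_ite_eq',
    if_pos (Finset.mem_Icc.2 ⟨le_rfl, Nat.le_floor (by simpa using hx)⟩)]

/-- For every real `x ≥ 1`, `log x = ∫_1^x M(t) ⌊x/t⌋ t⁻¹ dt`. -/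
theorem log_eq_integral_mertens_floor (x : ℝ) (hx : 1 ≤ x) :
    Real.log x = ∫ t in (1:ℝ)..x, mertens t * (⌊x / t⌋ : ℝ) / t := by
  simp_rw [mul_div_right_comm (mertens _)]
  rw [integral_mul_floor_div hx (intervalIntegrable_mertens_div hx),
    Finset.sum_congr rfl fun m hm => integral_mertens_div (div_natCast_mem_Icc (by linarith) hm).1]
  exact (sum_sum_moebius_mul_log_div_div hx).symm
end

section
/- For every complex number s with Re s > 1, one has ∫_1^∞ M(x) x^{-s-1} dx = 1/(s ζ(s)). -/
/-!
The Dirichlet series of `μ` is `1/ζ(s)` for `Re s > 1`. Since `∑_{k ≤ n} |μ(k)| ≤ n`, Abel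
summation (`LSeries_eq_mul_integral'`) rewrites that series as `s ∫_1^∞ M(x) x^{-s-1} dx`.
-/

open MeasureTheory Real Filter Set

section Moebius

open ArithmeticFunction
open scoped ArithmeticFunction.Moebius

theorem LSeries_moebius_eq_inv_riemannZeta {s : ℂ} (hs : 1 < s.re) :
    LSeries (fun n ↦ (μ n : ℂ)) s = (riemannZeta s)⁻¹ := by
  refine eq_inv_of_mul_eq_one_right ?_
  rw [← LSeries_zeta_eq_riemannZeta hs]
  exact LSeries_zeta_mul_Lseries_moebius hs

theorem sum_norm_moebius_le (n : ℕ) : ∑ k ∈ Finset.Icc 1 n, ‖(μ k : ℂ)‖ ≤ n := by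
  calc ∑ k ∈ Finset.Icc 1 n, ‖(μ k : ℂ)‖ ≤ ∑ _k ∈ Finset.Icc 1 n, (1 : ℝ) :=
        Finset.sum_le_sum fun k _ ↦ by
          rw [Complex.norm_intCast]; exact_mod_cast abs_moebius_le_one
    _ = n := by simp

theorem LSeries_moebius_eq_mul_integral {s : ℂ} (hs : 1 < s.re) :
    LSeries (fun n ↦ (μ n : ℂ)) s =
      s * ∫ t in Ioi (1 : ℝ), (∑ k ∈ Finset.Icc 1 ⌊t⌋₊, (μ k : ℂ)) * (t : ℂ) ^ (-(s + 1)) := by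
  refine LSeries_eq_mul_integral' _ zero_le_one hs (Asymptotics.isBigO_of_le _ fun n ↦ ?_)
  rw [Real.rpow_one, Real.norm_of_nonneg (Finset.sum_nonneg fun _ _ ↦ norm_nonneg _)]
  exact (sum_norm_moebius_le n).trans (le_abs_self _)

end Moebius

/-- For `Re s > 1`, `∫_1^∞ M(x) x^{-s-1} dx = 1/(s ζ(s))`. -/
theorem mellin_mertens (s : ℂ) (hs : 1 < s.re) :
    ∫ x in Set.Ioi (1:ℝ), (mertens x : ℂ) * (x : ℂ) ^ (-s - 1) =
      1 / (s * riemannZeta s) := by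
  have hs0 : s ≠ 0 := Complex.ne_zero_of_one_lt_re hs
  have hmellin := (LSeries_moebius_eq_mul_integral hs).symm.trans
    (LSeries_moebius_eq_inv_riemannZeta hs)
  rw [one_div, mul_inv, ← hmellin, inv_mul_cancel_left₀ hs0]
  refine setIntegral_congr_fun measurableSet_Ioi fun x _ ↦ ?_
  simp only [mertens, neg_add', Complex.ofReal_sum, Complex.ofReal_intCast]
end

section
/- Let 1 < p < ∞ and q = p/(p-1). For every complex number s with Re s > 2/q, one has ∫_1^∞ H_p(x) x^{-s-1} dx = 1/(s (s + 2/p - 1) ζ(s + 2/p - 1)). -/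
open MeasureTheory Real Filter Set

/-- `H_p(x) = ∫_1^x M(t) t^{-2/p} dt`. -/
noncomputable def Hfn (p : ℝ) (x : ℝ) : ℝ :=
  ∫ t in (1:ℝ)..x, mertens t * t ^ (-(2 / p))

/-! Write `H_p(x) = ∫_1^x g` with `g(t) = M(t) t^{-2/p}` and exchange the two integrals
(legitimate since `|M(t)| ≤ t`). The inner integral `∫_t^∞ x^{-s-1} dx = t^{-s}/s` turns the
left side into `s⁻¹ ∫_1^∞ M(t) t^{-w-1} dt` with `w = s + 2/p - 1`, `Re w > 1`, and by Abel
summation this last integral is `L(μ, w)/w = 1/(w ζ(w))`. -/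

lemma setIntegral_Ioi_indicator_Ici {E : Type*} [NormedAddCommGroup E] [NormedSpace ℝ E]
    {a b : ℝ} (hab : a < b) (h : ℝ → E) :
    ∫ x in Ioi a, (Ici b).indicator h x = ∫ x in Ioi b, h x := by
  rw [integral_indicator measurableSet_Ici, Measure.restrict_restrict measurableSet_Ici,
    inter_eq_left.mpr (Ici_subset_Ioi.mpr hab), integral_Ici_eq_integral_Ioi]

section Mellin

variable {g : ℝ → ℂ} {s : ℂ}

lemma re_neg_sub_one_lt (hs : 0 < s.re) : (-s - 1).re < -1 := by
  simp only [Complex.sub_re, Complex.neg_re, Complex.one_re]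
  linarith

lemma aestronglyMeasurable_of_integrableOn_mul_cpow
    (hg : IntegrableOn (fun t => g t * (t : ℂ) ^ (-s)) (Ioi 1)) :
    AEStronglyMeasurable g (volume.restrict (Ioi 1)) := by
  refine (hg.aestronglyMeasurable.mul
    (Complex.measurable_ofReal.pow_const s).aestronglyMeasurable).congr ?_
  filter_upwards [ae_restrict_mem measurableSet_Ioi] with t (ht : 1 < t)
  rw [Pi.mul_apply, mul_assoc,
    ← Complex.cpow_add _ _ (Complex.ofReal_ne_zero.2 (one_pos.trans ht).ne'), neg_add_cancel,
    Complex.cpow_zero, mul_one]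

lemma integral_Ioi_indicator_Ici_cpow (hs : 0 < s.re) {t : ℝ} (ht : 1 < t) :
    ∫ x in Ioi (1 : ℝ), (Ici t).indicator (fun x : ℝ => (x : ℂ) ^ (-s - 1)) x =
      (t : ℂ) ^ (-s) / s := by
  rw [setIntegral_Ioi_indicator_Ici ht,
    integral_Ioi_cpow_of_lt (re_neg_sub_one_lt hs) (one_pos.trans ht)]
  simp [neg_div_neg_eq]

lemma integral_Ioi_indicator_Ici_norm_cpow (hs : 0 < s.re) {t : ℝ} (ht : 1 < t) :
    ∫ x in Ioi (1 : ℝ), (Ici t).indicator (fun x : ℝ => ‖(x : ℂ) ^ (-s - 1)‖) x =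
      ‖(t : ℂ) ^ (-s)‖ / s.re := by
  have ht0 : 0 < t := one_pos.trans ht
  rw [setIntegral_Ioi_indicator_Ici ht, Complex.norm_cpow_eq_rpow_re_of_pos ht0,
    setIntegral_congr_fun measurableSet_Ioi fun x (hx : t < x) =>
      Complex.norm_cpow_eq_rpow_re_of_pos (ht0.trans hx) _,
    integral_Ioi_rpow_of_lt (re_neg_sub_one_lt hs) ht0]
  simp [neg_div_neg_eq]

lemma integrable_mul_indicator_Ici_cpow (hs : 0 < s.re)
    (hg : IntegrableOn (fun t => g t * (t : ℂ) ^ (-s)) (Ioi 1)) :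
    Integrable
      (fun z : ℝ × ℝ => g z.2 * (Ici z.2).indicator (fun x : ℝ => (x : ℂ) ^ (-s - 1)) z.1)
      ((volume.restrict (Ioi 1)).prod (volume.restrict (Ioi 1))) := by
  refine (integrable_prod_iff' ?_).2 ⟨?_, ?_⟩
  · exact (aestronglyMeasurable_of_integrableOn_mul_cpow hg).comp_snd.mul
      (((Complex.measurable_ofReal.pow_const _).comp measurable_fst).ite
        (measurableSet_le measurable_snd measurable_fst) measurable_const).aestronglyMeasurable
  · filter_upwards [ae_restrict_mem measurableSet_Ioi] with t (ht : 1 < t)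
    exact (((integrableOn_Ioi_cpow_of_lt (re_neg_sub_one_lt hs) one_pos).indicator
      measurableSet_Ici).const_mul (g t))
  · refine (hg.norm.div_const s.re).congr ?_
    filter_upwards [ae_restrict_mem measurableSet_Ioi] with t (ht : 1 < t)
    simp_rw [norm_mul, norm_indicator_eq_indicator_norm]
    rw [integral_const_mul, integral_Ioi_indicator_Ici_norm_cpow hs ht, mul_div_assoc]

theorem integral_Ioi_intervalIntegral_mul_cpow (hs : 0 < s.re)
    (hg : IntegrableOn (fun t => g t * (t : ℂ) ^ (-s)) (Ioi 1)) :
    ∫ x in Ioi (1 : ℝ), (∫ t in (1 : ℝ)..x, g t) * (x : ℂ) ^ (-s - 1) =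
      (∫ t in Ioi (1 : ℝ), g t * (t : ℂ) ^ (-s)) / s := by
  set f : ℝ → ℝ → ℂ := fun x t => g t * (Ici t).indicator (fun x : ℝ => (x : ℂ) ^ (-s - 1)) x
  have hinner (x : ℝ) (hx : 1 < x) :
      ∫ t in Ioi 1, f x t = (∫ t in (1 : ℝ)..x, g t) * (x : ℂ) ^ (-s - 1) := by
    have : (fun t => f x t) = fun t => (Iic x).indicator g t * (x : ℂ) ^ (-s - 1) := by
      ext t
      by_cases htx : t ≤ x <;> simp [f, indicator_apply, htx]
    rw [this, integral_mul_const, integral_indicator measurableSet_Iic,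
      Measure.restrict_restrict measurableSet_Iic, Iic_inter_Ioi,
      intervalIntegral.integral_of_le hx.le]
  have houter (t : ℝ) (ht : 1 < t) : ∫ x in Ioi 1, f x t = g t * (t : ℂ) ^ (-s) / s := by
    rw [integral_const_mul, integral_Ioi_indicator_Ici_cpow hs ht, mul_div_assoc]
  calc ∫ x in Ioi (1 : ℝ), (∫ t in (1 : ℝ)..x, g t) * (x : ℂ) ^ (-s - 1)
      = ∫ x in Ioi 1, ∫ t in Ioi 1, f x t :=
        (setIntegral_congr_fun measurableSet_Ioi hinner).symm
    _ = ∫ t in Ioi 1, ∫ x in Ioi 1, f x t :=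
        integral_integral_swap (integrable_mul_indicator_Ici_cpow hs hg)
    _ = ∫ t in Ioi 1, g t * (t : ℂ) ^ (-s) / s := setIntegral_congr_fun measurableSet_Ioi houter
    _ = (∫ t in Ioi (1 : ℝ), g t * (t : ℂ) ^ (-s)) / s := integral_div _ _

end Mellin

lemma measurable_mertens : Measurable mertens :=
  (measurable_from_nat
    (f := fun n => ∑ k ∈ Finset.Icc 1 n, (ArithmeticFunction.moebius k : ℝ))).comp
      Nat.measurable_floor

lemma sum_abs_moebius_le (n : ℕ) :
    ∑ k ∈ Finset.Icc 1 n, |(ArithmeticFunction.moebius k : ℝ)| ≤ n :=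
  calc ∑ k ∈ Finset.Icc 1 n, |(ArithmeticFunction.moebius k : ℝ)|
      ≤ ∑ k ∈ Finset.Icc 1 n, (1 : ℝ) :=
        Finset.sum_le_sum fun k _ => mod_cast ArithmeticFunction.abs_moebius_le_one
    _ = n := by simp

lemma abs_mertens_le {t : ℝ} (ht : 0 ≤ t) : |mertens t| ≤ t :=
  (Finset.abs_sum_le_sum_abs _ _).trans ((sum_abs_moebius_le _).trans (Nat.floor_le ht))

lemma integrableOn_mertens_mul_cpow {w : ℂ} (hw : 1 < w.re) :
    IntegrableOn (fun t : ℝ => (mertens t : ℂ) * (t : ℂ) ^ (-(w + 1))) (Ioi 1) := by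
  refine (integrableOn_Ioi_rpow_of_lt (by linarith : -w.re < -1) zero_lt_one).mono' ?_ ?_
  · exact (Complex.measurable_ofReal.comp measurable_mertens).aestronglyMeasurable.mul
      (Complex.measurable_ofReal.pow_const _).aestronglyMeasurable
  · filter_upwards [ae_restrict_mem measurableSet_Ioi] with t (ht : 1 < t)
    have ht0 : 0 < t := one_pos.trans ht
    have hre : (-(w + 1)).re = -w.re - 1 := by
      simp only [Complex.neg_re, Complex.add_re, Complex.one_re]; ring
    rw [norm_mul, Complex.norm_real, Complex.norm_cpow_eq_rpow_re_of_pos ht0, hre]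
    calc ‖mertens t‖ * t ^ (-w.re - 1) ≤ t * t ^ (-w.re - 1) := by
          gcongr; exact abs_mertens_le ht0.le
      _ = t ^ (-w.re) := by
          rw [rpow_sub ht0, rpow_one]; field_simp

lemma integral_mertens_mul_cpow {w : ℂ} (hw : 1 < w.re) :
    ∫ t in Ioi (1 : ℝ), (mertens t : ℂ) * (t : ℂ) ^ (-(w + 1)) = 1 / (w * riemannZeta w) := by
  have hO : (fun n ↦ ∑ k ∈ Finset.Icc 1 n, ‖((ArithmeticFunction.moebius k : ℤ) : ℂ)‖)
      =O[atTop] fun n ↦ (n : ℝ) ^ (1 : ℝ) := by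
    refine Asymptotics.isBigO_of_le _ fun n => ?_
    simp_rw [Complex.norm_intCast, rpow_one, norm_natCast]
    rw [norm_of_nonneg (by positivity)]
    exact_mod_cast sum_abs_moebius_le n
  have hζ := ArithmeticFunction.LSeries_zeta_mul_Lseries_moebius hw
  rw [ArithmeticFunction.LSeries_zeta_eq_riemannZeta hw,
    LSeries_eq_mul_integral' _ zero_le_one (by linarith) hO] at hζ
  refine eq_one_div_of_mul_eq_one_right ?_
  simp only [mertens]
  push_cast
  linear_combination hζ

/-- For `1 < p < ∞`, `q = p/(p-1)`, and `Re s > 2/q`,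
`∫_1^∞ H_p(x) x^{-s-1} dx = 1/(s (s + 2/p - 1) ζ(s + 2/p - 1))`. -/
theorem mellin_H (p q : ℝ) (hp : 1 < p) (hq : q = p / (p - 1))
    (s : ℂ) (hs : 2 / q < s.re) :
    ∫ x in Set.Ioi (1:ℝ), (Hfn p x : ℂ) * (x : ℂ) ^ (-s - 1) =
      1 / (s * (s + (2 / p : ℝ) - 1) * riemannZeta (s + (2 / p : ℝ) - 1)) := by
  have hq' : 2 / q = 2 - 2 / p := by
    rw [hq]; field_simp [(by linarith : p - 1 ≠ 0)]
  have hp' : 2 / p < 2 := by rw [div_lt_iff₀ (by linarith)]; linarith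
  have hs0 : 0 < s.re := by linarith
  set w : ℂ := s + (2 / p : ℝ) - 1
  have hw : 1 < w.re := by
    simp only [w, Complex.sub_re, Complex.add_re, Complex.ofReal_re, Complex.one_re]
    linarith
  have hH (x : ℝ) : (Hfn p x : ℂ) = ∫ t in (1 : ℝ)..x, ((mertens t * t ^ (-(2 / p)) : ℝ) : ℂ) :=
    intervalIntegral.integral_ofReal.symm
  have hkernel : EqOn (fun t : ℝ => ((mertens t * t ^ (-(2 / p)) : ℝ) : ℂ) * (t : ℂ) ^ (-s))
      (fun t : ℝ => (mertens t : ℂ) * (t : ℂ) ^ (-(w + 1))) (Ioi 1) := by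
    intro t (ht : 1 < t)
    have ht0 : (t : ℂ) ≠ 0 := Complex.ofReal_ne_zero.2 (one_pos.trans ht).ne'
    simp only [Complex.ofReal_mul, Complex.ofReal_cpow (one_pos.trans ht).le, mul_assoc,
      ← Complex.cpow_add _ _ ht0, w]
    congr 2
    push_cast
    ring
  simp_rw [hH]
  rw [integral_Ioi_intervalIntegral_mul_cpow hs0
      ((integrableOn_mertens_mul_cpow hw).congr_fun hkernel.symm measurableSet_Ioi),
    setIntegral_congr_fun measurableSet_Ioi hkernel, integral_mertens_mul_cpow hw]
  field_simp
end

section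
/- Let 1 < p < ∞. There is a constant C > 0 such that for every f ∈ L_p((0,∞)) (with respect to Lebesgue measure), the integral Tf(x) = ∫_0^∞ f(θ) ρ(θ/x) θ^{-1} dθ converges absolutely for every x > 0, and ‖Tf‖_{L_p(0,∞)} ≤ C ‖f‖_{L_p(0,∞)}. -/
/-!
Since `0 ≤ ρ(θ/x)/θ ≤ min(1/x, 1/θ)`, it suffices to bound the positive operator with kernel
`min(1/x, 1/θ)`, which is homogeneous of degree `-1`. For `0 < a < 1` its moments are
`∫₀^∞ min(1/x, 1/θ) θ^{-a} dθ = x^{-a} / (a (1 - a))`, so Schur's test with the weight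
`θ^{-1/(p q)}` (`q` the conjugate exponent) gives the bound `p q`. For fixed `x` the kernel lies in
`L_q`, so Hölder's inequality gives the absolute convergence of `Tf(x)`.
-/

open MeasureTheory Real Filter Set Function
open scoped ENNReal

theorem lintegral_mul_rpow_le_of_weight {β : Type*} [MeasurableSpace β] {ν : Measure β} {p q : ℝ}
    (hpq : p.HolderConjugate q) {k w g : β → ℝ≥0∞} (hk : AEMeasurable k ν)
    (hw : AEMeasurable w ν) (hg : AEMeasurable g ν) (hw0 : ∀ᵐ θ ∂ν, w θ ≠ 0)
    (hwtop : ∀ᵐ θ ∂ν, w θ ≠ ⊤) :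
    (∫⁻ θ, k θ * g θ ∂ν) ^ p ≤
      (∫⁻ θ, k θ * w θ ^ q ∂ν) ^ (p / q) * ∫⁻ θ, k θ * (w θ ^ p)⁻¹ * g θ ^ p ∂ν := by
  have hp := hpq.pos
  have hq := hpq.symm.pos
  have hsplit : ∀ᵐ θ ∂ν,
      k θ * g θ = (k θ ^ q⁻¹ * w θ) * (k θ ^ p⁻¹ * (w θ)⁻¹ * g θ) := by
    filter_upwards [hw0, hwtop] with θ h0 htop
    calc k θ * g θ = k θ ^ (q⁻¹ + p⁻¹) * (w θ * (w θ)⁻¹) * g θ := by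
          rw [add_comm, hpq.inv_add_inv_eq_one, ENNReal.rpow_one,
            ENNReal.mul_inv_cancel h0 htop, mul_one]
      _ = _ := by
          rw [ENNReal.rpow_add_of_nonneg _ _ (inv_nonneg.2 hq.le) (inv_nonneg.2 hp.le)]; ring
  have hq_pow (θ : β) : (k θ ^ q⁻¹ * w θ) ^ q = k θ * w θ ^ q := by
    rw [ENNReal.mul_rpow_of_nonneg _ _ hq.le, ← ENNReal.rpow_mul, inv_mul_cancel₀ hq.ne',
      ENNReal.rpow_one]
  have hp_pow (θ : β) : (k θ ^ p⁻¹ * (w θ)⁻¹ * g θ) ^ p = k θ * (w θ ^ p)⁻¹ * g θ ^ p := by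
    rw [ENNReal.mul_rpow_of_nonneg _ _ hp.le, ENNReal.mul_rpow_of_nonneg _ _ hp.le,
      ← ENNReal.rpow_mul, inv_mul_cancel₀ hp.ne', ENNReal.rpow_one, ENNReal.inv_rpow]
  have hholder := ENNReal.lintegral_mul_le_Lp_mul_Lq ν hpq.symm
    (f := fun θ => k θ ^ q⁻¹ * w θ) (g := fun θ => k θ ^ p⁻¹ * (w θ)⁻¹ * g θ)
    (by fun_prop) (by fun_prop)
  simp only [Pi.mul_apply, hq_pow, hp_pow] at hholder
  calc (∫⁻ θ, k θ * g θ ∂ν) ^ p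
      ≤ ((∫⁻ θ, k θ * w θ ^ q ∂ν) ^ (1 / q) *
          (∫⁻ θ, k θ * (w θ ^ p)⁻¹ * g θ ^ p ∂ν) ^ (1 / p)) ^ p := by
        rw [lintegral_congr_ae hsplit]
        exact ENNReal.rpow_le_rpow hholder hp.le
    _ = _ := by
        rw [ENNReal.mul_rpow_of_nonneg _ _ hp.le, ← ENNReal.rpow_mul, ← ENNReal.rpow_mul,
          one_div_mul_cancel hp.ne', ENNReal.rpow_one, one_div_mul_eq_div]

theorem lintegral_rpow_lintegral_mul_le_of_schur {α β : Type*} [MeasurableSpace α]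
    [MeasurableSpace β] {μ : Measure α} {ν : Measure β} [SFinite μ] [SFinite ν] {p q : ℝ}
    (hpq : p.HolderConjugate q) {K : α → β → ℝ≥0∞} (hK : Measurable (uncurry K))
    {v : α → ℝ≥0∞} {w : β → ℝ≥0∞} (hv : AEMeasurable v μ) (hw : AEMeasurable w ν)
    (hw0 : ∀ᵐ θ ∂ν, w θ ≠ 0) (hwtop : ∀ᵐ θ ∂ν, w θ ≠ ⊤) {A B : ℝ≥0∞}
    (hA : ∀ᵐ x ∂μ, ∫⁻ θ, K x θ * w θ ^ q ∂ν ≤ A * v x ^ q)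
    (hB : ∀ᵐ θ ∂ν, ∫⁻ x, K x θ * v x ^ p ∂μ ≤ B * w θ ^ p)
    {g : β → ℝ≥0∞} (hg : AEMeasurable g ν) :
    ∫⁻ x, (∫⁻ θ, K x θ * g θ ∂ν) ^ p ∂μ ≤ A ^ (p / q) * B * ∫⁻ θ, g θ ^ p ∂ν := by
  have hp := hpq.pos
  have hq := hpq.symm.pos
  set G : α → β → ℝ≥0∞ := fun x θ => K x θ * (w θ ^ p)⁻¹ * g θ ^ p
  have hG (x : α) : AEMeasurable (G x) ν :=
    (hK.of_uncurry_left.aemeasurable.mul (hw.pow_const p).inv).mul (hg.pow_const p)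
  have hvG : AEMeasurable (uncurry fun x θ => v x ^ p * G x θ) (μ.prod ν) :=
    (hv.comp_fst.pow_const p).mul ((hK.aemeasurable.mul (hw.comp_snd.pow_const p).inv).mul
      (hg.comp_snd.pow_const p))
  calc ∫⁻ x, (∫⁻ θ, K x θ * g θ ∂ν) ^ p ∂μ
      ≤ ∫⁻ x, A ^ (p / q) * ∫⁻ θ, v x ^ p * G x θ ∂ν ∂μ := by
        refine lintegral_mono_ae ?_
        filter_upwards [hA] with x hx
        calc (∫⁻ θ, K x θ * g θ ∂ν) ^ p
            ≤ (∫⁻ θ, K x θ * w θ ^ q ∂ν) ^ (p / q) * ∫⁻ θ, G x θ ∂ν :=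
              lintegral_mul_rpow_le_of_weight hpq hK.of_uncurry_left.aemeasurable hw hg hw0 hwtop
          _ ≤ (A * v x ^ q) ^ (p / q) * ∫⁻ θ, G x θ ∂ν := by gcongr
          _ = _ := by
              rw [lintegral_const_mul'' _ (hG x), ENNReal.mul_rpow_of_nonneg _ _ (by positivity),
                ← ENNReal.rpow_mul, mul_div_cancel₀ _ hq.ne', mul_assoc]
    _ = A ^ (p / q) * ∫⁻ θ, (w θ ^ p)⁻¹ * g θ ^ p * ∫⁻ x, K x θ * v x ^ p ∂μ ∂ν := by
        have hvG_lint : AEMeasurable (fun x => ∫⁻ θ, v x ^ p * G x θ ∂ν) μ :=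
          hvG.lintegral_prod_right'
        rw [lintegral_const_mul'' _ hvG_lint, lintegral_lintegral_swap hvG]
        congr 1
        refine lintegral_congr fun θ => ?_
        have hKv : AEMeasurable (fun x => K x θ * v x ^ p) μ :=
          hK.of_uncurry_right.aemeasurable.mul (hv.pow_const p)
        rw [← lintegral_const_mul'' _ hKv]
        exact lintegral_congr fun x => by ring
    _ ≤ A ^ (p / q) * ∫⁻ θ, B * g θ ^ p ∂ν := by
        gcongr A ^ (p / q) * ?_
        refine lintegral_mono_ae ?_
        filter_upwards [hB, hw0, hwtop] with θ hθ h0 htop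
        calc (w θ ^ p)⁻¹ * g θ ^ p * ∫⁻ x, K x θ * v x ^ p ∂μ
            ≤ (w θ ^ p)⁻¹ * g θ ^ p * (B * w θ ^ p) := by gcongr
          _ = B * g θ ^ p * ((w θ ^ p)⁻¹ * w θ ^ p) := by ring
          _ = B * g θ ^ p := by
              rw [ENNReal.inv_mul_cancel (by positivity) (by finiteness), mul_one]
    _ = _ := by rw [lintegral_const_mul'' _ (hg.pow_const p), mul_assoc]

theorem fract_div_div_le_min_inv {x θ : ℝ} (hx : 0 < x) (hθ : 0 < θ) :
    Int.fract (θ / x) / θ ≤ min x⁻¹ θ⁻¹ := by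
  refine le_min ?_ ?_
  · have hfloor : (0 : ℝ) ≤ ⌊θ / x⌋ := Int.cast_nonneg (Int.floor_nonneg.2 (by positivity))
    calc Int.fract (θ / x) / θ ≤ θ / x / θ := by
          gcongr; rw [← Int.self_sub_floor]; linarith
      _ = x⁻¹ := by field_simp
  · exact div_le_div_of_nonneg_right (Int.fract_lt_one _).le hθ.le |>.trans_eq (one_div θ)

theorem lintegral_min_inv_mul_rpow {a x : ℝ} (ha₀ : 0 < a) (ha₁ : a < 1) (hx : 0 < x) :
    ∫⁻ θ in Ioi 0, ENNReal.ofReal (min x⁻¹ θ⁻¹) * ENNReal.ofReal θ ^ (-a) =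
      ENNReal.ofReal (a * (1 - a))⁻¹ * ENNReal.ofReal x ^ (-a) := by
  have hnear : ∫⁻ θ in Ioc 0 x, ENNReal.ofReal (min x⁻¹ θ⁻¹) * ENNReal.ofReal θ ^ (-a) =
      ENNReal.ofReal (x ^ (-a) / (1 - a)) := by
    rw [setLIntegral_congr_fun measurableSet_Ioc (g := fun θ => ENNReal.ofReal (x⁻¹ * θ ^ (-a)))
      fun θ hθ => by
        rw [min_eq_left (inv_anti₀ hθ.1 hθ.2), ENNReal.ofReal_rpow_of_pos hθ.1,
          ← ENNReal.ofReal_mul (inv_nonneg.2 hx.le)]]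
    rw [← ofReal_integral_eq_lintegral_ofReal, ← intervalIntegral.integral_of_le hx.le,
      intervalIntegral.integral_const_mul, integral_rpow (Or.inl (by linarith)),
      zero_rpow (by linarith), sub_zero, rpow_add hx, rpow_one]
    · congr 1
      field_simp
      ring
    · exact ((intervalIntegrable_iff_integrableOn_Ioc_of_le hx.le).mp
        (intervalIntegral.intervalIntegrable_rpow' (by linarith))).const_mul _
    · filter_upwards [ae_restrict_mem measurableSet_Ioc] with θ hθ
      have := hθ.1
      positivity
  have hfar : ∫⁻ θ in Ioi x, ENNReal.ofReal (min x⁻¹ θ⁻¹) * ENNReal.ofReal θ ^ (-a) =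
      ENNReal.ofReal (x ^ (-a) / a) := by
    rw [setLIntegral_congr_fun measurableSet_Ioi (g := fun θ => ENNReal.ofReal (θ ^ (-a - 1)))
      fun θ (hθ : x < θ) => by
        have hθ₀ : 0 < θ := hx.trans hθ
        dsimp only
        rw [min_eq_right (inv_anti₀ hx hθ.le), ENNReal.ofReal_rpow_of_pos hθ₀,
          ← ENNReal.ofReal_mul (by positivity), rpow_sub_one hθ₀.ne', div_eq_inv_mul]]
    rw [← ofReal_integral_eq_lintegral_ofReal (integrableOn_Ioi_rpow_of_lt (by linarith) hx),
      integral_Ioi_rpow_of_lt (by linarith) hx, sub_add_cancel]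
    · congr 1
      field_simp
    · filter_upwards [ae_restrict_mem measurableSet_Ioi] with θ (hθ : x < θ)
      have := hx.trans hθ
      positivity
  rw [← Ioc_union_Ioi_eq_Ioi hx.le, lintegral_union measurableSet_Ioi (Ioc_disjoint_Ioi le_rfl),
    hnear, hfar, ← ENNReal.ofReal_add (by positivity) (by positivity),
    ENNReal.ofReal_rpow_of_pos hx, ← ENNReal.ofReal_mul (inv_nonneg.2 (by nlinarith))]
  have h1a : 1 - a ≠ 0 := by linarith
  congr 1
  field_simp
  ring

theorem memLp_min_inv {q x : ℝ} (hq : 1 < q) (hx : 0 < x) :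
    MemLp (fun θ : ℝ => min x⁻¹ θ⁻¹) (ENNReal.ofReal q) (volume.restrict (Ioi 0)) := by
  have hmeas : Measurable fun θ : ℝ => min x⁻¹ θ⁻¹ := measurable_const.min measurable_inv
  rw [← integrable_norm_rpow_iff hmeas.aestronglyMeasurable (by simp; linarith)
    ENNReal.ofReal_ne_top, ENNReal.toReal_ofReal (by linarith), ← IntegrableOn,
    ← Ioc_union_Ioi_eq_Ioi hx.le, integrableOn_union]
  constructor
  · refine Measure.integrableOn_of_bounded (M := x⁻¹ ^ q) (by simp)
      (hmeas.norm.pow_const q).aestronglyMeasurable ?_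
    filter_upwards [ae_restrict_mem measurableSet_Ioc] with θ hθ
    have := hθ.1
    rw [norm_of_nonneg (by positivity), norm_of_nonneg (by positivity)]
    gcongr
    exact min_le_left _ _
  · refine (integrableOn_Ioi_rpow_of_lt (by linarith : -q < -1) hx).congr_fun
      (fun θ (hθ : x < θ) => ?_) measurableSet_Ioi
    have hθ₀ : 0 < θ := hx.trans hθ
    rw [min_eq_right (inv_anti₀ hx hθ.le), norm_of_nonneg (by positivity), inv_rpow hθ₀.le]
    exact rpow_neg hθ₀.le q

theorem eLpNorm_lintegral_min_inv_mul_le {p q : ℝ} (hpq : p.HolderConjugate q) {g : ℝ → ℝ≥0∞}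
    (hg : AEMeasurable g (volume.restrict (Ioi 0))) :
    eLpNorm (fun x => ∫⁻ θ in Ioi 0, ENNReal.ofReal (min x⁻¹ θ⁻¹) * g θ) (ENNReal.ofReal p)
        (volume.restrict (Ioi 0)) ≤
      ENNReal.ofReal (p * q) * eLpNorm g (ENNReal.ofReal p) (volume.restrict (Ioi 0)) := by
  have hp := hpq.pos
  have hq := hpq.symm.pos
  set w : ℝ → ℝ≥0∞ := fun θ => ENNReal.ofReal θ ^ (-(p * q)⁻¹)
  have hwq (θ : ℝ) : w θ ^ q = ENNReal.ofReal θ ^ (-p⁻¹) := by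
    rw [← ENNReal.rpow_mul]; congr 1; field_simp
  have hwp (θ : ℝ) : w θ ^ p = ENNReal.ofReal θ ^ (-q⁻¹) := by
    rw [← ENNReal.rpow_mul]; congr 1; field_simp
  have hA : ∀ᵐ x ∂volume.restrict (Ioi 0), ∫⁻ θ in Ioi 0, ENNReal.ofReal (min x⁻¹ θ⁻¹) * w θ ^ q ≤
      ENNReal.ofReal (p * q) * w x ^ q := by
    filter_upwards [ae_restrict_mem measurableSet_Ioi] with x hx
    simp only [hwq]
    rw [lintegral_min_inv_mul_rpow hpq.inv_pos (inv_lt_one_of_one_lt₀ hpq.lt) hx,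
      hpq.one_sub_inv, mul_inv, inv_inv, inv_inv]
  have hB : ∀ᵐ θ ∂volume.restrict (Ioi 0), ∫⁻ x in Ioi 0, ENNReal.ofReal (min x⁻¹ θ⁻¹) * w x ^ p ≤
      ENNReal.ofReal (p * q) * w θ ^ p := by
    filter_upwards [ae_restrict_mem measurableSet_Ioi] with θ hθ
    simp only [hwp, min_comm _ θ⁻¹]
    rw [lintegral_min_inv_mul_rpow hpq.symm.inv_pos (inv_lt_one_of_one_lt₀ hpq.symm.lt) hθ,
      hpq.symm.one_sub_inv, mul_inv, inv_inv, inv_inv, mul_comm q]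
  have hw0 : ∀ᵐ θ ∂volume.restrict (Ioi 0), w θ ≠ 0 := by
    filter_upwards [ae_restrict_mem measurableSet_Ioi] with θ (hθ : 0 < θ)
    simp [w, ENNReal.rpow_eq_zero_iff, hθ]
  have hwtop : ∀ᵐ θ ∂volume.restrict (Ioi 0), w θ ≠ ⊤ := by
    filter_upwards [ae_restrict_mem measurableSet_Ioi] with θ (hθ : 0 < θ)
    simp [w, ENNReal.rpow_eq_top_iff, hθ]
  have hschur := lintegral_rpow_lintegral_mul_le_of_schur hpq (by fun_prop) (by fun_prop)
    (by fun_prop) hw0 hwtop hA hB hg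
  rw [eLpNorm_eq_lintegral_rpow_enorm_toReal (by simpa using hp) ENNReal.ofReal_ne_top,
    eLpNorm_eq_lintegral_rpow_enorm_toReal (by simpa using hp) ENNReal.ofReal_ne_top,
    ENNReal.toReal_ofReal hp.le]
  simp only [enorm_eq_self]
  have hconst : ENNReal.ofReal (p * q) ^ (p / q) * ENNReal.ofReal (p * q) =
      ENNReal.ofReal (p * q) ^ p := by
    nth_rw 2 [← ENNReal.rpow_one (ENNReal.ofReal (p * q))]
    rw [← ENNReal.rpow_add_of_nonneg _ _ (by positivity) zero_le_one, hpq.div_conj_eq_sub_one,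
      sub_add_cancel]
  calc _ ≤ (ENNReal.ofReal (p * q) ^ (p / q) * ENNReal.ofReal (p * q) *
        ∫⁻ θ in Ioi 0, g θ ^ p) ^ (1 / p) := by gcongr
    _ = _ := by
        rw [hconst, ENNReal.mul_rpow_of_nonneg _ _ (by positivity), ← ENNReal.rpow_mul,
          mul_one_div_cancel hp.ne', ENNReal.rpow_one]

theorem enorm_mul_fract_div_div_le (z : ℂ) {x θ : ℝ} (hx : 0 < x) (hθ : 0 < θ) :
    ‖z * ((Int.fract (θ / x) / θ : ℝ) : ℂ)‖ₑ ≤ ENNReal.ofReal (min x⁻¹ θ⁻¹) * ‖z‖ₑ := by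
  rw [enorm_mul, mul_comm, ← ofReal_norm, Complex.norm_real,
    norm_of_nonneg (div_nonneg (Int.fract_nonneg _) hθ.le)]
  gcongr
  exact fract_div_div_le_min_inv hx hθ

theorem integrableOn_mul_fract_div_div {p : ℝ} (hp : 1 < p) {f : ℝ → ℂ}
    (hf : MemLp f (ENNReal.ofReal p) (volume.restrict (Ioi 0))) {x : ℝ} (hx : 0 < x) :
    IntegrableOn (fun θ : ℝ => f θ * ((Int.fract (θ / x) / θ : ℝ) : ℂ)) (Ioi 0) := by
  have hpq := Real.HolderConjugate.conjExponent hp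
  have := hpq.ennrealOfReal
  have hk : MemLp (fun θ : ℝ => ((Int.fract (θ / x) / θ : ℝ) : ℂ))
      (ENNReal.ofReal p.conjExponent) (volume.restrict (Ioi 0)) := by
    have hmeas : Measurable fun θ : ℝ => ((Int.fract (θ / x) / θ : ℝ) : ℂ) := by fun_prop
    refine (memLp_min_inv hpq.symm.lt hx).of_le hmeas.aestronglyMeasurable ?_
    filter_upwards [ae_restrict_mem measurableSet_Ioi] with θ (hθ : 0 < θ)
    rw [Complex.norm_real, norm_of_nonneg (div_nonneg (Int.fract_nonneg _) hθ.le),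
      norm_of_nonneg (by positivity)]
    exact fract_div_div_le_min_inv hx hθ
  exact hf.integrable_mul hk

/-- The operator `T` is bounded on `L_p(0,∞)`: there is `C > 0` such that for every
`f ∈ L_p(0,∞)`, the integral `Tf(x) = ∫_0^∞ f(θ) ρ(θ/x) θ⁻¹ dθ` converges absolutely for
every `x > 0`, and `‖Tf‖_p ≤ C ‖f‖_p`. -/
theorem T_bounded_on_Lp (p : ℝ) (hp : 1 < p) :
    ∃ C : ℝ, 0 < C ∧ ∀ f : ℝ → ℂ,
      MemLp f (ENNReal.ofReal p) (volume.restrict (Set.Ioi 0)) →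
      (∀ x > (0:ℝ),
        IntegrableOn (fun θ : ℝ => f θ * ((Int.fract (θ / x) / θ : ℝ) : ℂ)) (Set.Ioi 0)) ∧
      eLpNorm (fun x : ℝ => ∫ θ in Set.Ioi (0:ℝ), f θ * ((Int.fract (θ / x) / θ : ℝ) : ℂ))
          (ENNReal.ofReal p) (volume.restrict (Set.Ioi 0)) ≤
        ENNReal.ofReal C *
          eLpNorm f (ENNReal.ofReal p) (volume.restrict (Set.Ioi 0)) := by
  have hpq := Real.HolderConjugate.conjExponent hp
  refine ⟨p * p.conjExponent, mul_pos hpq.pos hpq.symm.pos, fun f hf =>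
    ⟨fun x hx => integrableOn_mul_fract_div_div hp hf hx, ?_⟩⟩
  calc _ ≤ eLpNorm (fun x => ∫⁻ θ in Ioi 0, ENNReal.ofReal (min x⁻¹ θ⁻¹) * ‖f θ‖ₑ)
        (ENNReal.ofReal p) (volume.restrict (Ioi 0)) := by
        refine eLpNorm_mono_enorm_ae ?_
        filter_upwards [ae_restrict_mem measurableSet_Ioi] with x (hx : 0 < x)
        refine (enorm_integral_le_lintegral_enorm _).trans ?_
        exact setLIntegral_mono' measurableSet_Ioi fun θ hθ =>
          enorm_mul_fract_div_div_le _ hx hθ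
    _ ≤ ENNReal.ofReal (p * p.conjExponent) *
        eLpNorm (fun θ => ‖f θ‖ₑ) (ENNReal.ofReal p) (volume.restrict (Ioi 0)) :=
      eLpNorm_lintegral_min_inv_mul_le hpq hf.aestronglyMeasurable.enorm
    _ = _ := by rw [eLpNorm_enorm]
end
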